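/- arXiv:1807.07115 — 3 statements merged into one kernel-verified Lean document; each statement's English description precedes it below -/
import Mathlib

section
/- Let 0 < λ < μ, set a = λ − μ and let b > 0. Then the cell-mass matching condition ∫_k^{k+1} (−(a/b)) e^{(a/b)x} dx = (λ/μ)^k (1 − λ/μ) holds for every k ∈ ℕ if and only if b = (μ − λ)/(ln μ − ln λ). -/
/-! The mass of the exponential density `-c e^{cx}` on `[k, k+1]` is `e^{ck}(1 - e^c)`, a geometric
sequence with ratio `e^c`; it matches `r^k (1 - r)` for every `k` exactly when `e^c = r`. With
`c = a/b` and `r = λ/μ` this says `(λ - μ)/b = ln λ - ln μ`, i.e. `b` is the logarithmic mean. -/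

open Real

theorem integral_neg_mul_exp_mul (c p q : ℝ) :
    ∫ x in p..q, -c * exp (c * x) = exp (c * p) - exp (c * q) := by
  have hderiv : ∀ x ∈ Set.uIcc p q,
      HasDerivAt (fun x => -exp (c * x)) (-c * exp (c * x)) x := fun x _ => by
    simpa [mul_comm] using (((hasDerivAt_id x).const_mul c).exp).fun_neg
  rw [intervalIntegral.integral_eq_sub_of_hasDerivAt hderiv
    ((by fun_prop : Continuous fun x => -c * exp (c * x)).intervalIntegrable p q)]
  ring

theorem integral_cell_neg_mul_exp_mul (c : ℝ) (k : ℕ) :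
    ∫ x in (k : ℝ)..(k : ℝ) + 1, -c * exp (c * x) = exp c ^ k * (1 - exp c) := by
  rw [integral_neg_mul_exp_mul, mul_add, mul_one, exp_add, mul_comm c, exp_nat_mul]
  ring

theorem integral_cell_neg_mul_exp_mul_eq_geometric_iff (c r : ℝ) :
    (∀ k : ℕ, ∫ x in (k : ℝ)..(k : ℝ) + 1, -c * exp (c * x) = r ^ k * (1 - r)) ↔ exp c = r := by
  simp only [integral_cell_neg_mul_exp_mul]
  refine ⟨fun h => ?_, fun h k => by rw [h]⟩
  simpa using h 0

theorem sub_div_eq_log_sub_log_iff {lam mu b : ℝ} (h0 : 0 < lam) (h1 : lam < mu)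
    (hb : b ≠ 0) :
    (lam - mu) / b = log lam - log mu ↔ b = (mu - lam) / (log mu - log lam) := by
  have hlog : log mu - log lam ≠ 0 := sub_ne_zero.2 (log_lt_log h0 h1).ne'
  rw [div_eq_iff hb, eq_div_iff hlog]
  constructor <;> intro h <;> linarith

/-- Matching the cell masses of the stationary Smoluchowski density with the
stationary `M/M/1` distribution characterizes the diffusion coefficient as the
logarithmic mean `b = (μ − λ)/(ln μ − ln λ)`. -/
theorem stmt_5 (lam mu b : ℝ) (h0 : 0 < lam) (h1 : lam < mu) (hb : 0 < b)
    (a : ℝ) (ha : a = lam - mu) :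
    (∀ k : ℕ, (∫ x in (k : ℝ)..((k : ℝ) + 1), -(a / b) * Real.exp ((a / b) * x))
        = (lam / mu) ^ k * (1 - lam / mu)) ↔
      b = (mu - lam) / (Real.log mu - Real.log lam) := by
  have hmu : 0 < mu := h0.trans h1
  rw [integral_cell_neg_mul_exp_mul_eq_geometric_iff, ← exp_log (div_pos h0 hmu), exp_eq_exp,
    log_div h0.ne' hmu.ne', ha]
  exact sub_div_eq_log_sub_log_iff h0 h1 hb.ne'
end

section
/- Let a ∈ ℝ, b > 0 and x₀ ≥ 0, and let ρ^F be the Smoluchowski fundamental solution on the half-line with these parameters. Then for all x > 0 and t > 0, ∂_t ρ^F(x,t) + a ∂_x ρ^F(x,t) − b ∂_xx ρ^F(x,t) = 0. -/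
/-!
Each of the three terms of `smolFund` solves `u_t + a u_x - b u_xx = 0` on its own. The first two
are heat kernels centred at `±x₀` and transported with velocity `a`. For the third, multiplying
by `exp ((a / b) x)` turns a solution with drift `-a` into one with drift `a`, and
`∫ y in Ioi ((x + x₀ + a t) / √(4 b t)), exp (-y²)` solves the equation with drift `-a`, being
the complementary error function of the similarity variable moving with velocity `-a`.
-/

open MeasureTheory Set

/-- The Smoluchowski fundamental solution on the half-line with drift `a`,
diffusion `b` and initial point `x₀`. -/
noncomputable def smolFund (a b x₀ : ℝ) (x t : ℝ) : ℝ :=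
  (Real.sqrt (4 * Real.pi * b * t))⁻¹ * Real.exp (-(x - x₀ - a * t) ^ 2 / (4 * b * t))
  + (Real.sqrt (4 * Real.pi * b * t))⁻¹ *
      Real.exp (-(a / b) * x₀ - (x + x₀ - a * t) ^ 2 / (4 * b * t))
  - a / (2 * b) * Real.exp ((a / b) * x) *
      ((2 / Real.sqrt Real.pi) *
        ∫ y in Ioi ((x + x₀ + a * t) / Real.sqrt (4 * b * t)), Real.exp (-y ^ 2))

open Filter Topology Real

theorem hasDerivAt_integral_Ioi {E : Type*} [NormedAddCommGroup E] [NormedSpace ℝ E]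
    [CompleteSpace E] {f : ℝ → E} (hf : Integrable f) (hcont : Continuous f) (u : ℝ) :
    HasDerivAt (fun v => ∫ y in Ioi v, f y) (-f u) u := by
  have hsplit :
      (fun v => ∫ y in Ioi v, f y) = fun v => (∫ y in Ioi 0, f y) - ∫ y in 0..v, f y := by
    funext v
    exact eq_sub_of_add_eq'
      (intervalIntegral.integral_interval_add_Ioi hf.integrableOn hf.integrableOn)
  rw [hsplit]
  exact (hcont.integral_hasStrictDerivAt 0 u).hasDerivAt.const_sub _

theorem hasDerivAt_inv_sqrt_const_mul {c t : ℝ} (hct : 0 < c * t) :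
    HasDerivAt (fun τ => (√(c * τ))⁻¹) (-(√(c * t))⁻¹ / (2 * t)) t := by
  have ht : t ≠ 0 := by rintro rfl; simp at hct
  refine ((hasDerivAt_id' t |>.const_mul c).sqrt hct.ne').inv (sqrt_pos.2 hct).ne'
    |>.congr_deriv ?_
  field_simp
  rw [sq_sqrt hct.le]

def SolvesDriftDiffusionAt (a b : ℝ) (u : ℝ → ℝ → ℝ) (x t : ℝ) : Prop :=
  ∃ (uₜ : ℝ) (uₓ : ℝ → ℝ) (uₓₓ : ℝ), HasDerivAt (u x ·) uₜ t ∧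
    (∀ᶠ ξ in 𝓝 x, HasDerivAt (u · t) (uₓ ξ) ξ) ∧ HasDerivAt uₓ uₓₓ x ∧
    uₜ + a * uₓ x - b * uₓₓ = 0

namespace SolvesDriftDiffusionAt

variable {a b x t : ℝ} {u v : ℝ → ℝ → ℝ}

theorem add (hu : SolvesDriftDiffusionAt a b u x t) (hv : SolvesDriftDiffusionAt a b v x t) :
    SolvesDriftDiffusionAt a b (fun ξ τ => u ξ τ + v ξ τ) x t := by
  obtain ⟨ut, ux, uxx, hut, hux, huxx, hu⟩ := hu
  obtain ⟨vt, vx, vxx, hvt, hvx, hvxx, hv⟩ := hv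
  refine ⟨ut + vt, fun ξ => ux ξ + vx ξ, uxx + vxx, hut.add hvt, ?_, huxx.add hvxx, ?_⟩
  · filter_upwards [hux, hvx] with ξ hu hv using hu.add hv
  · linear_combination hu + hv

theorem sub (hu : SolvesDriftDiffusionAt a b u x t) (hv : SolvesDriftDiffusionAt a b v x t) :
    SolvesDriftDiffusionAt a b (fun ξ τ => u ξ τ - v ξ τ) x t := by
  obtain ⟨ut, ux, uxx, hut, hux, huxx, hu⟩ := hu
  obtain ⟨vt, vx, vxx, hvt, hvx, hvxx, hv⟩ := hv
  refine ⟨ut - vt, fun ξ => ux ξ - vx ξ, uxx - vxx, hut.sub hvt, ?_, huxx.sub hvxx, ?_⟩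
  · filter_upwards [hux, hvx] with ξ hu hv using hu.sub hv
  · linear_combination hu - hv

theorem const_mul (c : ℝ) (hu : SolvesDriftDiffusionAt a b u x t) :
    SolvesDriftDiffusionAt a b (fun ξ τ => c * u ξ τ) x t := by
  obtain ⟨ut, ux, uxx, hut, hux, huxx, hu⟩ := hu
  refine ⟨c * ut, fun ξ => c * ux ξ, c * uxx, hut.const_mul c, ?_, huxx.const_mul c, ?_⟩
  · filter_upwards [hux] with ξ hu using hu.const_mul c
  · linear_combination c * hu

theorem exp_mul (hu : SolvesDriftDiffusionAt (-a) b u x t) (hb : b ≠ 0) :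
    SolvesDriftDiffusionAt a b (fun ξ τ => exp (a / b * ξ) * u ξ τ) x t := by
  obtain ⟨ut, ux, uxx, hut, hux, huxx, hu⟩ := hu
  have hexp (ξ : ℝ) : HasDerivAt (fun ξ => exp (a / b * ξ)) (exp (a / b * ξ) * (a / b)) ξ := by
    simpa using ((hasDerivAt_id' ξ).const_mul (a / b)).exp
  refine ⟨exp (a / b * x) * ut,
    fun ξ => exp (a / b * ξ) * (a / b) * u ξ t + exp (a / b * ξ) * ux ξ, _,
    hut.const_mul _, ?_,
    ((hexp x).mul_const (a / b) |>.mul hux.self_of_nhds).add ((hexp x).mul huxx), ?_⟩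
  · filter_upwards [hux] with ξ hu using (hexp ξ).mul hu
  · -- the zeroth-order term `(a / b) * (a - b * (a / b)) * u` is the one that cancels
    have hab : a / b * b = a := div_mul_cancel₀ a hb
    linear_combination exp (a / b * x) * hu
      - exp (a / b * x) * (a / b * u x t + 2 * ux x) * hab

theorem deriv_add_mul_deriv_sub_mul_deriv_deriv (hu : SolvesDriftDiffusionAt a b u x t) :
    deriv (u x ·) t + a * deriv (u · t) x - b * deriv (deriv (u · t)) x = 0 := by
  obtain ⟨ut, ux, uxx, hut, hux, huxx, hu⟩ := hu
  have hderiv : deriv (u · t) =ᶠ[𝓝 x] ux := hux.mono fun ξ h => h.deriv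
  rw [hut.deriv, hux.self_of_nhds.deriv, hderiv.deriv_eq, huxx.deriv, hu]

end SolvesDriftDiffusionAt

noncomputable def driftGaussian (a b c x t : ℝ) : ℝ :=
  (√(4 * π * b * t))⁻¹ * exp (-(x - c - a * t) ^ 2 / (4 * b * t))

theorem solvesDriftDiffusionAt_driftGaussian (a c : ℝ) {b x t : ℝ} (hb : 0 < b) (ht : 0 < t) :
    SolvesDriftDiffusionAt a b (driftGaussian a b c) x t := by
  have hbt : 4 * b * t ≠ 0 := by positivity
  have hx (ξ : ℝ) : HasDerivAt (driftGaussian a b c · t)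
      (-(ξ - c - a * t) / (2 * b * t) * driftGaussian a b c ξ t) ξ := by
    refine ((((hasDerivAt_id' ξ).sub_const c).sub_const (a * t)).fun_pow 2).fun_neg.div_const
      (4 * b * t) |>.exp.const_mul (√(4 * π * b * t))⁻¹ |>.congr_deriv ?_
    simp only [driftGaussian]
    field_simp
    ring
  have hlin : HasDerivAt (fun ξ => -(ξ - c - a * t) / (2 * b * t)) (-1 / (2 * b * t)) x := by
    simpa using (((hasDerivAt_id' x).sub_const c).sub_const (a * t)).fun_neg.div_const _
  have htime := (hasDerivAt_inv_sqrt_const_mul (c := 4 * π * b) (by positivity)).fun_mul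
    ((((hasDerivAt_id' t).const_mul a).const_sub (x - c)).fun_pow 2 |>.fun_neg.fun_div
      ((hasDerivAt_id' t).const_mul (4 * b)) hbt).exp
  refine ⟨_, _, _, htime, .of_forall hx, hlin.mul (hx x), ?_⟩
  simp only [driftGaussian]
  field_simp
  ring

theorem solvesDriftDiffusionAt_integral_Ioi_exp_neg_sq (a c : ℝ) {b x t : ℝ} (hb : 0 < b)
    (ht : 0 < t) :
    SolvesDriftDiffusionAt (-a) b
      (fun ξ τ => ∫ y in Ioi ((ξ + c + a * τ) / √(4 * b * τ)), exp (-y ^ 2)) x t := by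
  have hbt : 0 < 4 * b * t := by positivity
  have hs : √(4 * b * t) ≠ 0 := (sqrt_pos.2 hbt).ne'
  have htail (w : ℝ) : HasDerivAt (fun v => ∫ y in Ioi v, exp (-y ^ 2)) (-exp (-w ^ 2)) w :=
    hasDerivAt_integral_Ioi (by simpa using integrable_exp_neg_mul_sq one_pos) (by fun_prop) w
  have hw (ξ : ℝ) :
      HasDerivAt (fun ξ => (ξ + c + a * t) / √(4 * b * t)) (1 / √(4 * b * t)) ξ :=
    ((hasDerivAt_id' ξ).add_const c |>.add_const (a * t)).div_const _
  have hwt := (((hasDerivAt_id' t).const_mul a).const_add (x + c)).fun_div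
    (((hasDerivAt_id' t).const_mul (4 * b)).sqrt hbt.ne') hs
  refine ⟨_, fun ξ => -exp (-((ξ + c + a * t) / √(4 * b * t)) ^ 2) * (1 / √(4 * b * t)), _,
    (htail _).comp t hwt, .of_forall fun ξ => (htail _).comp ξ (hw ξ),
    (((hw x).fun_pow 2).fun_neg.exp.fun_neg).mul_const _, ?_⟩
  simp only [Nat.cast_ofNat, Nat.add_one_sub_one, pow_one]
  field_simp
  ring

theorem smolFund_eq (a b x₀ : ℝ) :
    smolFund a b x₀ = fun ξ τ => driftGaussian a b x₀ ξ τ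
      + exp (-(a / b) * x₀) * driftGaussian a b (-x₀) ξ τ
      - a / (2 * b) * (2 / √π) *
        (exp (a / b * ξ) * ∫ y in Ioi ((ξ + x₀ + a * τ) / √(4 * b * τ)), exp (-y ^ 2)) := by
  funext ξ τ
  simp only [smolFund, driftGaussian, sub_neg_eq_add, sub_eq_add_neg (-(a / b) * x₀), exp_add,
    neg_div]
  ring

theorem stmt_6_general (a b x₀ : ℝ) (hb : 0 < b) :
    ∀ x > (0:ℝ), ∀ t > (0:ℝ),
      deriv (fun τ => smolFund a b x₀ x τ) t
        + a * deriv (fun ξ => smolFund a b x₀ ξ t) x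
        - b * deriv (deriv (fun ξ => smolFund a b x₀ ξ t)) x = 0 := by
  intro x _ t ht
  have hsol : SolvesDriftDiffusionAt a b (smolFund a b x₀) x t := by
    rw [smolFund_eq]
    exact ((solvesDriftDiffusionAt_driftGaussian a x₀ hb ht).add
      ((solvesDriftDiffusionAt_driftGaussian a (-x₀) hb ht).const_mul _)).sub
      (((solvesDriftDiffusionAt_integral_Ioi_exp_neg_sq a x₀ hb ht).exp_mul hb.ne').const_mul _)
  exact hsol.deriv_add_mul_deriv_sub_mul_deriv_deriv

/-- The Smoluchowski fundamental solution satisfies the drift-diffusion PDE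
`ρ_t + a ρ_x − b ρ_xx = 0` for `x > 0`, `t > 0`. -/
theorem stmt_6 (a b x₀ : ℝ) (hb : 0 < b) (hx₀ : 0 ≤ x₀) :
    ∀ x > (0:ℝ), ∀ t > (0:ℝ),
      deriv (fun τ => smolFund a b x₀ x τ) t
        + a * deriv (fun ξ => smolFund a b x₀ ξ t) x
        - b * deriv (deriv (fun ξ => smolFund a b x₀ ξ t)) x = 0 :=
  stmt_6_general a b x₀ hb
end

section
/- Let a ∈ ℝ, b > 0 and x₀ ≥ 0, and let ρ^F be the Smoluchowski fundamental solution on the half-line with these parameters. Then for every t > 0 the function x ↦ ρ^F(x,t) is integrable on (0,∞) and ∫₀^∞ ρ^F(x,t) dx = 1. -/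
open MeasureTheory Set

/-! With `G z = ∫_z^∞ e^{-y²} dy`, `α = a/b`, `β = x₀ + a t` and `c = √(4bt)`, the function
`F x = (2/√π) (G ((x - β)/c) + e^{αx} G ((x + β)/c))` satisfies `F' = -2 ρ^F`: completing the
square turns `e^{αx} e^{-((x + β)/c)²}` into the image Gaussian of `ρ^F`. As `F → 0` at infinity
and `F 0 = (2/√π) (G (-β/c) + G (β/c)) = 2`, the fundamental theorem of calculus gives mass `1`.
Integrability on `(0, ∞)` follows from `G z ≤ √π e^{-z²}` for `z ≥ 0`. -/

open Filter Topology Real Asymptotics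

noncomputable def gaussTail (z : ℝ) : ℝ := ∫ y in Ioi z, exp (-y ^ 2)

lemma integrable_exp_neg_sq : Integrable fun y : ℝ => exp (-y ^ 2) := by
  simpa using integrable_exp_neg_mul_sq one_pos

lemma integral_exp_neg_sq : ∫ y, exp (-y ^ 2) = √π := by
  simpa using integral_gaussian 1

lemma gaussTail_nonneg (z : ℝ) : 0 ≤ gaussTail z :=
  setIntegral_nonneg measurableSet_Ioi fun _ _ => (exp_pos _).le

lemma gaussTail_neg_add_gaussTail (w : ℝ) : gaussTail (-w) + gaussTail w = √π := by
  have hreflect : gaussTail (-w) = ∫ y in Iic w, exp (-y ^ 2) := by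
    have h := integral_comp_neg_Ioi (-w) fun y : ℝ => exp (-y ^ 2)
    simp only [neg_sq, neg_neg] at h
    exact h
  rw [hreflect, gaussTail, intervalIntegral.integral_Iic_add_Ioi
    integrable_exp_neg_sq.integrableOn integrable_exp_neg_sq.integrableOn, integral_exp_neg_sq]

lemma hasDerivAt_gaussTail (z : ℝ) : HasDerivAt gaussTail (-exp (-z ^ 2)) z := by
  have hsplit : gaussTail = fun w => gaussTail 0 - ∫ y in (0 : ℝ)..w, exp (-y ^ 2) := by
    funext w
    rw [← intervalIntegral.integral_Ioi_sub_Ioi' integrable_exp_neg_sq.integrableOn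
      integrable_exp_neg_sq.integrableOn, gaussTail, gaussTail, sub_sub_cancel]
  rw [hsplit]
  exact ((by fun_prop : Continuous fun y : ℝ => exp (-y ^ 2)).integral_hasStrictDerivAt 0 z
    |>.hasDerivAt.const_sub _)

@[fun_prop]
lemma continuous_gaussTail : Continuous gaussTail :=
  continuous_iff_continuousAt.2 fun z => (hasDerivAt_gaussTail z).continuousAt

lemma gaussTail_le {z : ℝ} (hz : 0 ≤ z) : gaussTail z ≤ √π * exp (-z ^ 2) := by
  have hshift : Integrable fun y => exp (-z ^ 2) * exp (-(y - z) ^ 2) :=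
    (integrable_exp_neg_sq.comp_sub_right z).const_mul _
  -- for `y ≥ z ≥ 0` one has `y ^ 2 ≥ z ^ 2 + (y - z) ^ 2`
  have hpt : ∀ y ∈ Ioi z, exp (-y ^ 2) ≤ exp (-z ^ 2) * exp (-(y - z) ^ 2) := fun y hy => by
    rw [← exp_add, exp_le_exp]
    nlinarith [mem_Ioi.mp hy]
  calc gaussTail z ≤ ∫ y in Ioi z, exp (-z ^ 2) * exp (-(y - z) ^ 2) :=
        setIntegral_mono_on integrable_exp_neg_sq.integrableOn hshift.integrableOn
          measurableSet_Ioi hpt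
    _ ≤ ∫ y, exp (-z ^ 2) * exp (-(y - z) ^ 2) :=
        setIntegral_le_integral hshift (Eventually.of_forall fun _ => by positivity)
    _ = √π * exp (-z ^ 2) := by
        rw [integral_const_mul, integral_sub_right_eq_self (fun y => exp (-y ^ 2)) z,
          integral_exp_neg_sq, mul_comm]

lemma isBigO_gaussTail_atTop : gaussTail =O[atTop] fun z => exp (-z ^ 2) := by
  refine IsBigO.of_bound √π ?_
  filter_upwards [eventually_ge_atTop 0] with z hz
  rw [norm_of_nonneg (gaussTail_nonneg z), norm_of_nonneg (exp_pos _).le]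
  exact gaussTail_le hz

lemma tendsto_exp_neg_sq_atTop : Tendsto (fun z : ℝ => exp (-z ^ 2)) atTop (𝓝 0) :=
  tendsto_exp_atBot.comp (tendsto_neg_atTop_atBot.comp (tendsto_pow_atTop two_ne_zero))

lemma tendsto_gaussTail_atTop : Tendsto gaussTail atTop (𝓝 0) :=
  isBigO_gaussTail_atTop.trans_tendsto tendsto_exp_neg_sq_atTop

section Affine

variable (α β : ℝ) {c : ℝ}

lemma tendsto_add_div_atTop (hc : 0 < c) : Tendsto (fun x => (x + β) / c) atTop atTop :=
  (tendsto_atTop_add_const_right _ β tendsto_id).atTop_div_const hc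

lemma exp_mul_mul_exp_neg_sq (hc : c ≠ 0) (x : ℝ) :
    exp (α * x) * exp (-((x + β) / c) ^ 2) =
      exp (α ^ 2 * c ^ 2 / 4 - α * β) * exp (-((x + (β - α * c ^ 2 / 2)) / c) ^ 2) := by
  rw [← exp_add, ← exp_add]
  congr 1
  field_simp
  ring

lemma integrable_exp_neg_sq_add_div (hc : c ≠ 0) :
    Integrable fun x => exp (-((x + β) / c) ^ 2) :=
  (integrable_exp_neg_sq.comp_div hc).comp_add_right β

lemma integrable_exp_mul_mul_exp_neg_sq (hc : c ≠ 0) :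
    Integrable fun x => exp (α * x) * exp (-((x + β) / c) ^ 2) := by
  simp_rw [exp_mul_mul_exp_neg_sq α β hc]
  exact (integrable_exp_neg_sq_add_div _ hc).const_mul _

lemma tendsto_exp_mul_mul_exp_neg_sq_atTop (hc : 0 < c) :
    Tendsto (fun x => exp (α * x) * exp (-((x + β) / c) ^ 2)) atTop (𝓝 0) := by
  simp_rw [exp_mul_mul_exp_neg_sq α β hc.ne']
  simpa using (tendsto_exp_neg_sq_atTop.comp (tendsto_add_div_atTop _ hc)).const_mul
    (exp (α ^ 2 * c ^ 2 / 4 - α * β))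

lemma isBigO_exp_mul_mul_gaussTail_atTop (hc : 0 < c) :
    (fun x => exp (α * x) * gaussTail ((x + β) / c)) =O[atTop]
      fun x => exp (α * x) * exp (-((x + β) / c) ^ 2) :=
  (isBigO_refl _ _).mul (isBigO_gaussTail_atTop.comp_tendsto (tendsto_add_div_atTop β hc))

lemma integrableOn_exp_mul_mul_gaussTail (hc : 0 < c) (s : ℝ) :
    IntegrableOn (fun x => exp (α * x) * gaussTail ((x + β) / c)) (Ioi s) := by
  have hloc : LocallyIntegrableOn (fun x => exp (α * x) * gaussTail ((x + β) / c)) (Ici s) :=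
    (by fun_prop : Continuous fun x => exp (α * x) * gaussTail ((x + β) / c))
      |>.locallyIntegrable.locallyIntegrableOn _
  exact (hloc.integrableOn_of_isBigO_atTop (isBigO_exp_mul_mul_gaussTail_atTop α β hc)
    ((integrable_exp_mul_mul_exp_neg_sq α β hc.ne').integrableAtFilter _)).mono_set
      Ioi_subset_Ici_self

end Affine

noncomputable def reflectedDensity (α β c x : ℝ) : ℝ :=
  (√π * c)⁻¹ * (exp (-((x - β) / c) ^ 2) + exp (α * x) * exp (-((x + β) / c) ^ 2))
    - α / 2 * (2 / √π) * (exp (α * x) * gaussTail ((x + β) / c))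

noncomputable def reflectedTail (α β c x : ℝ) : ℝ :=
  2 / √π * (gaussTail ((x - β) / c) + exp (α * x) * gaussTail ((x + β) / c))

section Reflected

variable (α β : ℝ) {c : ℝ}

lemma hasDerivAt_reflectedTail (hc : c ≠ 0) (x : ℝ) :
    HasDerivAt (reflectedTail α β c) (-2 * reflectedDensity α β c x) x := by
  have hleft : HasDerivAt (fun x => gaussTail ((x - β) / c))
      (-exp (-((x - β) / c) ^ 2) * (1 / c)) x :=
    (hasDerivAt_gaussTail _).comp x (by simpa using ((hasDerivAt_id x).sub_const β).div_const c)
  have hright : HasDerivAt (fun x => exp (α * x) * gaussTail ((x + β) / c))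
      (exp (α * x) * α * gaussTail ((x + β) / c)
        + exp (α * x) * (-exp (-((x + β) / c) ^ 2) * (1 / c))) x := by
    have hexp : HasDerivAt (fun x => exp (α * x)) (exp (α * x) * α) x := by
      simpa using ((hasDerivAt_id x).const_mul α).exp
    exact hexp.mul ((hasDerivAt_gaussTail _).comp x
      (by simpa using ((hasDerivAt_id x).add_const β).div_const c))
  refine ((hleft.add hright).const_mul (2 / √π)).congr_deriv ?_
  have : √π ≠ 0 := (sqrt_pos.2 pi_pos).ne'
  rw [reflectedDensity]
  field_simp
  ring

lemma tendsto_reflectedTail_atTop (hc : 0 < c) :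
    Tendsto (reflectedTail α β c) atTop (𝓝 0) := by
  have hleft := tendsto_gaussTail_atTop.comp (tendsto_add_div_atTop (-β) hc)
  have hright := (isBigO_exp_mul_mul_gaussTail_atTop α β hc).trans_tendsto
    (tendsto_exp_mul_mul_exp_neg_sq_atTop α β hc)
  unfold reflectedTail
  simpa [sub_eq_add_neg] using (hleft.add hright).const_mul (2 / √π)

lemma reflectedTail_zero : reflectedTail α β c 0 = 2 := by
  have : √π ≠ 0 := (sqrt_pos.2 pi_pos).ne'
  rw [reflectedTail, mul_zero, exp_zero, one_mul, zero_sub, zero_add, neg_div,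
    gaussTail_neg_add_gaussTail]
  field_simp

lemma integrableOn_reflectedDensity (hc : 0 < c) (s : ℝ) :
    IntegrableOn (reflectedDensity α β c) (Ioi s) := by
  have hleft : Integrable fun x => exp (-((x - β) / c) ^ 2) := by
    simpa [sub_eq_add_neg] using integrable_exp_neg_sq_add_div (-β) hc.ne'
  have hgauss := (hleft.add (integrable_exp_mul_mul_exp_neg_sq α β hc.ne')).const_mul (√π * c)⁻¹
  exact hgauss.integrableOn.sub
    ((integrableOn_exp_mul_mul_gaussTail α β hc s).const_mul (α / 2 * (2 / √π)))

lemma integral_reflectedDensity (hc : 0 < c) :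
    ∫ x in Ioi 0, reflectedDensity α β c x = 1 := by
  have hftc := integral_Ioi_of_hasDerivAt_of_tendsto
    (hasDerivAt_reflectedTail α β hc.ne' 0).continuousAt.continuousWithinAt
    (fun x _ => hasDerivAt_reflectedTail α β hc.ne' x)
    ((integrableOn_reflectedDensity α β hc 0).const_mul (-2))
    (tendsto_reflectedTail_atTop α β hc)
  rw [integral_const_mul, reflectedTail_zero] at hftc
  linarith

end Reflected

lemma smolFund_eq_reflectedDensity {a b x₀ t : ℝ} (hb : 0 < b) (ht : 0 < t) (x : ℝ) :
    smolFund a b x₀ x t = reflectedDensity (a / b) (x₀ + a * t) √(4 * b * t) x := by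
  have hbt : 0 < 4 * b * t := by positivity
  have hc2 : √(4 * b * t) ^ 2 = 4 * b * t := sq_sqrt hbt.le
  have hsqrt : √(4 * π * b * t) = √π * √(4 * b * t) := by
    rw [← sqrt_mul pi_pos.le]; ring_nf
  have himage : exp (-(a / b) * x₀ - (x + x₀ - a * t) ^ 2 / (4 * b * t)) =
      exp (a / b * x) * exp (-((x + (x₀ + a * t)) / √(4 * b * t)) ^ 2) := by
    rw [← exp_add, div_pow, hc2]
    congr 1
    field_simp
    ring
  have hleft : exp (-(x - x₀ - a * t) ^ 2 / (4 * b * t)) =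
      exp (-((x - (x₀ + a * t)) / √(4 * b * t)) ^ 2) := by
    rw [div_pow, hc2]; ring_nf
  rw [smolFund, reflectedDensity, hsqrt, himage, hleft, gaussTail, ← add_assoc]
  ring

theorem stmt_8_general (a b x₀ : ℝ) (hb : 0 < b) :
    ∀ t > (0:ℝ),
      IntegrableOn (fun x => smolFund a b x₀ x t) (Ioi 0) ∧
      (∫ x in Ioi (0:ℝ), smolFund a b x₀ x t) = 1 := by
  intro t ht
  have hc : 0 < √(4 * b * t) := by positivity
  simp only [smolFund_eq_reflectedDensity hb ht]
  exact ⟨integrableOn_reflectedDensity _ _ hc 0, integral_reflectedDensity _ _ hc⟩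

/-- For every `t > 0` the Smoluchowski fundamental solution is an integrable
probability density on `(0,∞)`: its total mass is one. -/
theorem stmt_8 (a b x₀ : ℝ) (hb : 0 < b) (hx₀ : 0 ≤ x₀) :
    ∀ t > (0:ℝ),
      IntegrableOn (fun x => smolFund a b x₀ x t) (Ioi 0) ∧
      (∫ x in Ioi (0:ℝ), smolFund a b x₀ x t) = 1 :=
  stmt_8_general a b x₀ hb
end
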